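/- arXiv:2201.05625 — 9 statements merged into one kernel-verified Lean document; each statement's English description precedes it below -/
import Mathlib

section
/- Let A be a Banach algebra and σ : A → A a continuous algebra homomorphism with dense range. Suppose that for every closed two-sided ideal I of A, every continuous σ-derivation D : A → I is σ-inner (i.e. there exists x ∈ I with D(a) = σ(a)x − xσ(a) for all a ∈ A). Then for every closed two-sided ideal I of A, every continuous derivation D : A → I is inner (i.e. there exists x ∈ I with D(a) = ax − xa for all a ∈ A). -/
/-- Let `A` be a Banach algebra and `σ : A → A` a continuous algebra
homomorphism with dense range.  If for every closed two-sided ideal `I` of `A` every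
continuous `σ`-derivation `D : A → I` is `σ`-inner, then for every closed two-sided
ideal `I` of `A` every continuous derivation `D : A → I` is inner. -/
theorem sigma_ideal_amenable_implies_ideal_amenable
    {A : Type*} [NormedRing A] [NormedAlgebra ℂ A] [CompleteSpace A]
    (σ : A →L[ℂ] A) (hσmul : ∀ a b : A, σ (a * b) = σ a * σ b)
    (hσdense : DenseRange σ)
    (h : ∀ I : Submodule ℂ A, IsClosed (I : Set A) →
      (∀ a : A, ∀ x ∈ I, a * x ∈ I) → (∀ a : A, ∀ x ∈ I, x * a ∈ I) →
      ∀ D : A →L[ℂ] A, (∀ a : A, D a ∈ I) →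
        (∀ a b : A, D (a * b) = σ a * D b + D a * σ b) →
        ∃ x ∈ I, ∀ a : A, D a = σ a * x - x * σ a) :
    ∀ I : Submodule ℂ A, IsClosed (I : Set A) →
      (∀ a : A, ∀ x ∈ I, a * x ∈ I) → (∀ a : A, ∀ x ∈ I, x * a ∈ I) →
      ∀ D : A →L[ℂ] A, (∀ a : A, D a ∈ I) →
        (∀ a b : A, D (a * b) = a * D b + D a * b) →
        ∃ x ∈ I, ∀ a : A, D a = a * x - x * a := by
  intro I hIclosed hIl hIr D hDmem hDder
  obtain ⟨x, hxI, hx⟩ := h I hIclosed hIl hIr (D.comp σ) (fun a => hDmem (σ a))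
    (fun a b => by simp [hσmul, hDder])
  refine ⟨x, hxI, fun a => ?_⟩
  have key : ∀ b ∈ Set.range σ, D b = b * x - x * b := by
    rintro _ ⟨a, rfl⟩
    exact hx a
  have hcont : Continuous (fun b : A => D b - (b * x - x * b)) := by
    fun_prop
  have : ∀ b : A, D b - (b * x - x * b) = 0 := by
    have hclosed : IsClosed {b : A | D b - (b * x - x * b) = 0} :=
      isClosed_eq hcont continuous_const
    have hsub : Set.range σ ⊆ {b : A | D b - (b * x - x * b) = 0} := by
      intro b hb; simp [key b hb]
    intro b
    have := hclosed.closure_subset_iff.mpr hsub (hσdense b)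
    exact this
  exact sub_eq_zero.mp (this a)
end

section
/- Let A be a Banach algebra, I a closed two-sided ideal of A possessing a bounded approximate identity (a bounded net (e_i) in I with e_i·x → x and x·e_i → x in norm for every x ∈ I), and σ : A → A a continuous idempotent algebra homomorphism (σ ∘ σ = σ) with σ(I) = I. If every continuous σ-derivation from I into I is σ-inner, then every continuous σ-derivation from A into I is σ-inner. -/
/-- Let `A` be a Banach algebra, `I` a closed two-sided ideal of `A`
possessing a bounded approximate identity, and `σ : A → A` a continuous idempotent
algebra homomorphism with `σ(I) = I`.  If every continuous `σ`-derivation from `I`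
into `I` is `σ`-inner, then every continuous `σ`-derivation from `A` into `I` is
`σ`-inner. -/
theorem sigma_derivation_inner_of_inner_on_ideal
    {A : Type*} [NormedRing A] [NormedAlgebra ℂ A] [CompleteSpace A]
    (I : Submodule ℂ A) (hIclosed : IsClosed (I : Set A))
    (hIleft : ∀ a : A, ∀ x ∈ I, a * x ∈ I) (hIright : ∀ a : A, ∀ x ∈ I, x * a ∈ I)
    -- bounded approximate identity for `I`
    {ι : Type*} (lt : Filter ι) [lt.NeBot] (e : ι → A) (heI : ∀ i, e i ∈ I)
    (hbdd : ∃ C : ℝ, ∀ i, ‖e i‖ ≤ C)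
    (heleft : ∀ x ∈ I, Filter.Tendsto (fun i => e i * x) lt (nhds x))
    (heright : ∀ x ∈ I, Filter.Tendsto (fun i => x * e i) lt (nhds x))
    -- `σ` is a continuous idempotent endomorphism with `σ(I) = I`
    (σ : A →L[ℂ] A) (hσmul : ∀ a b : A, σ (a * b) = σ a * σ b)
    (hσidem : ∀ a : A, σ (σ a) = σ a) (hσI : σ '' (I : Set A) = (I : Set A))
    -- every continuous `σ`-derivation from `I` into `I` is `σ`-inner
    (h : ∀ d : I →L[ℂ] A, (∀ i : I, d i ∈ I) →
      (∀ i j : I, d ⟨(i : A) * (j : A), hIleft i j j.2⟩ = σ i * d j + d i * σ j) →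
      ∃ x ∈ I, ∀ i : I, d i = σ i * x - x * σ i) :
    -- then every continuous `σ`-derivation from `A` into `I` is `σ`-inner
    ∀ D : A →L[ℂ] A, (∀ a : A, D a ∈ I) →
      (∀ a b : A, D (a * b) = σ a * D b + D a * σ b) →
      ∃ x ∈ I, ∀ a : A, D a = σ a * x - x * σ a := by
  intro D hD hder
  obtain ⟨x, hxI, hx⟩ := h (D.comp I.subtypeL) (fun i => hD i)
    (fun i j => hder i j)
  refine ⟨x, hxI, fun a => ?_⟩
  have key : ∀ i, (D a - (σ a * x - x * σ a)) * σ (e i) = 0 := by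
    intro i
    have h1 := hder a (e i)
    have h2 : D (a * e i) = σ (a * e i) * x - x * σ (a * e i) :=
      hx ⟨a * e i, hIleft a (e i) (heI i)⟩
    have h3 : D (e i) = σ (e i) * x - x * σ (e i) := hx ⟨e i, heI i⟩
    have e1 : D a * σ (e i) = D (a * e i) - σ a * D (e i) := by
      rw [h1]; noncomm_ring
    rw [h2, h3, hσmul] at e1
    rw [sub_mul, e1]
    noncomm_ring
  have hmem : D a - (σ a * x - x * σ a) ∈ I :=
    I.sub_mem (hD a) (I.sub_mem (hIleft _ x hxI) (hIright _ x hxI))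
  have hmem' : D a - (σ a * x - x * σ a) ∈ ⇑σ '' (I : Set A) := by
    rw [hσI]; exact hmem
  obtain ⟨y, hyI, hy⟩ := hmem' 
  have t1 : Filter.Tendsto (fun i => (D a - (σ a * x - x * σ a)) * σ (e i)) lt
      (nhds (D a - (σ a * x - x * σ a))) := by
    have := (σ.continuous.tendsto y).comp (heright y hyI)
    rw [← hy]
    simpa [Function.comp_def, hσmul] using this
  have t2 : Filter.Tendsto (fun i => (D a - (σ a * x - x * σ a)) * σ (e i)) lt
      (nhds 0) := by
    simp only [key]
    exact tendsto_const_nhds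
  have := tendsto_nhds_unique t1 t2
  rw [sub_eq_zero] at this
  exact this
end

section
/- Let A be a Banach algebra over ℂ, σ : A → A a continuous algebra homomorphism, A♯ = Unitization ℂ A the unitization of A with σ̂ : A♯ → A♯ the induced unital homomorphism σ̂(a + λ1) = σ(a) + λ1, and let I be a closed two-sided ideal of A. Then I (viewed inside A♯ via the canonical embedding A ⊆ A♯) is a closed two-sided ideal of A♯, and if every continuous σ̂-derivation D̂ : A♯ → I is σ̂-inner via an element of I (i.e. D̂(u) = σ̂(u)·t − t·σ̂(u) for some t ∈ I), then every continuous σ-derivation D : A → I is σ-inner (i.e. D(a) = σ(a)·t − t·σ(a) for some t ∈ I). -/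
/-- The induced unital endomorphism `σ̂ : A♯ → A♯`, `σ̂ (a + λ•1) = σ a + λ•1`,
of the unitization `A♯ = Unitization ℂ A` of a Banach algebra `A`. -/
noncomputable def sigmaHat {A : Type*} [NonUnitalNormedRing A] [NormedSpace ℂ A]
    [IsScalarTower ℂ A A] [SMulCommClass ℂ A A] (σ : A → A) :
    Unitization ℂ A → Unitization ℂ A :=
  fun u => Unitization.inl u.fst + Unitization.inr (σ u.snd)

/-- The copy of an ideal `I ⊆ A` inside the unitization `A♯ = Unitization ℂ A`,
via the canonical embedding `A ⊆ A♯`. -/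
noncomputable def idealEmbed {A : Type*} [NonUnitalNormedRing A] [NormedSpace ℂ A]
    [IsScalarTower ℂ A A] [SMulCommClass ℂ A A] (I : Submodule ℂ A) :
    Set (Unitization ℂ A) :=
  Unitization.inr '' (I : Set A)

/-- Let `A` be a Banach algebra over `ℂ`, `σ : A → A` a continuous algebra
homomorphism, `A♯ = Unitization ℂ A` with the induced unital homomorphism `σ̂`, and `I` a
closed two-sided ideal of `A`.  Then `I`, viewed inside `A♯` via the canonical embedding,
is a closed two-sided ideal of `A♯`, and if every continuous `σ̂`-derivation
`D̂ : A♯ → I` is `σ̂`-inner via an element of `I`, then every continuous `σ`-derivation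
`D : A → I` is `σ`-inner. -/
theorem sigma_ideal_inner_of_unitization
    {A : Type*} [NonUnitalNormedRing A] [NormedSpace ℂ A]
    [IsScalarTower ℂ A A] [SMulCommClass ℂ A A] [RegularNormedAlgebra ℂ A]
    [CompleteSpace A]
    (σ : A →L[ℂ] A) (hσmul : ∀ a b : A, σ (a * b) = σ a * σ b)
    (I : Submodule ℂ A) (hIclosed : IsClosed (I : Set A))
    (hIleft : ∀ a : A, ∀ x ∈ I, a * x ∈ I) (hIright : ∀ a : A, ∀ x ∈ I, x * a ∈ I) :
    -- the copy of `I` inside `A♯` is a closed two-sided ideal of `A♯` ...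
    (IsClosed (idealEmbed I) ∧
      (0 : Unitization ℂ A) ∈ idealEmbed I ∧
      (∀ x ∈ idealEmbed I, ∀ y ∈ idealEmbed I, x + y ∈ idealEmbed I) ∧
      (∀ c : ℂ, ∀ x ∈ idealEmbed I, c • x ∈ idealEmbed I) ∧
      (∀ u : Unitization ℂ A, ∀ x ∈ idealEmbed I,
        u * x ∈ idealEmbed I ∧ x * u ∈ idealEmbed I)) ∧
    -- ... and if every continuous `σ̂`-derivation `D̂ : A♯ → I` is `σ̂`-inner via an
    -- element of `I`, then every continuous `σ`-derivation `D : A → I` is `σ`-inner.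
    ((∀ Dh : Unitization ℂ A →ₗ[ℂ] Unitization ℂ A, Continuous Dh →
        (∀ u : Unitization ℂ A, Dh u ∈ idealEmbed I) →
        (∀ u v : Unitization ℂ A,
          Dh (u * v) = sigmaHat σ u * Dh v + Dh u * sigmaHat σ v) →
        ∃ t ∈ I, ∀ u : Unitization ℂ A,
          Dh u = sigmaHat σ u * Unitization.inr t - Unitization.inr t * sigmaHat σ u) →
      ∀ D : A →ₗ[ℂ] A, Continuous D → (∀ a : A, D a ∈ I) →
        (∀ a b : A, D (a * b) = σ a * D b + D a * σ b) →
        ∃ t ∈ I, ∀ a : A, D a = σ a * t - t * σ a) := by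
  have hinr : Isometry ((↑) : A → Unitization ℂ A) := Unitization.isometry_inr
  constructor
  · refine ⟨?_, ⟨0, I.zero_mem, by simp⟩, ?_, ?_, ?_⟩
    · have h1 : IsComplete ((Unitization.inr '' (I : Set A)) : Set (Unitization ℂ A)) := by
        rw [isComplete_image_iff hinr.isUniformInducing]
        exact hIclosed.isComplete
      exact set_option synthInstance.maxHeartbeats 1000000 in h1.isClosed
    · rintro x ⟨a, ha, rfl⟩ y ⟨b, hb, rfl⟩
      exact ⟨a + b, I.add_mem ha hb, (Unitization.inr_add ℂ a b)⟩
    · rintro c x ⟨a, ha, rfl⟩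
      exact ⟨c • a, I.smul_mem c ha, (Unitization.inr_smul ℂ c a)⟩
    · rintro u x ⟨a, ha, rfl⟩
      constructor
      · refine ⟨u.fst • a + u.snd * a, I.add_mem (I.smul_mem _ ha) (hIleft _ _ ha), ?_⟩
        refine Unitization.ext ?_ ?_ <;> simp
      · refine ⟨u.fst • a + a * u.snd, I.add_mem (I.smul_mem _ ha) (hIright _ _ ha), ?_⟩
        refine Unitization.ext ?_ ?_ <;> simp
  · intro hyp D hDcont hDI hDder
    set Dh : Unitization ℂ A →ₗ[ℂ] Unitization ℂ A :=
      { toFun := fun u => Unitization.inr (D u.snd)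
        map_add' := by intro u v; simp [Unitization.inr_add]
        map_smul' := by intro c u; simp [Unitization.inr_smul] } with hDh
    have hDhcont : Continuous Dh := by
      have hsnd : Continuous (fun u : Unitization ℂ A => u.snd) := by
        exact continuous_snd.comp
          (Unitization.uniformEquivProd (𝕜 := ℂ) (A := A)).continuous
      exact (Unitization.continuous_inr).comp (hDcont.comp hsnd)
    obtain ⟨t, htI, ht⟩ := hyp Dh hDhcont
      (fun u => ⟨D u.snd, hDI _, rfl⟩)
      (by
        intro u v
        refine Unitization.ext ?_ ?_
        · simp [hDh, sigmaHat]
        · simp only [hDh, LinearMap.coe_mk, AddHom.coe_mk, Unitization.snd_mul, map_add,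
            map_smul, hDder, Unitization.snd_inr, sigmaHat, Unitization.snd_add,
            Unitization.snd_inl, Unitization.fst_mul, Unitization.fst_add,
            Unitization.fst_inl, Unitization.fst_inr, Unitization.fst_smul, zero_smul,
            zero_add, add_zero, smul_zero, mul_zero, zero_mul]
          abel
        )
    refine ⟨t, htI, fun a => ?_⟩
    have h1 := ht (Unitization.inr a)
    have h2 : sigmaHat σ (Unitization.inr a) = Unitization.inr (σ a) := by
      simp [sigmaHat]
    rw [h2] at h1
    have h3 : (Unitization.inr (D a) : Unitization ℂ A)
        = Unitization.inr (σ a * t - t * σ a) := by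
      have : (Unitization.inr (σ a * t - t * σ a) : Unitization ℂ A)
          = Unitization.inr (σ a) * Unitization.inr t
            - Unitization.inr t * Unitization.inr (σ a) := by
        push_cast [Unitization.inr_mul]
        refine Unitization.ext (by simp) (by simp)
      rw [this, ← h1]
      simp [hDh]
    exact Unitization.inr_injective h3
end

section
/- Let A and B be Banach algebras and φ : A → B a continuous surjective algebra homomorphism. Assume that every continuous derivation from A into every Banach A-bimodule is inner. Then for every continuous algebra homomorphism σ : B → B and every closed two-sided ideal I of B, every continuous σ-derivation D : B → I is σ-inner, i.e. there exists t ∈ I with D(b) = σ(b)t − tσ(b) for all b ∈ B. -/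
/-!
The composite `σ ∘ φ : A → B` makes the closed ideal `I` a Banach `A`-bimodule, acting by
multiplication on both sides, and `D ∘ φ : A → I` is then an ordinary derivation. Amenability
of `A` makes it inner, `D (φ a) = σ (φ a) t - t σ (φ a)` for some `t ∈ I`, and surjectivity
of `φ` turns this into `σ`-innerness of `D`.
-/

/-- A pair of continuous (bounded bilinear) actions `l, r : A → X → X` makes the Banach
space `X` a Banach `A`-bimodule: `l` is a left action, `r` is a right action (written with
the algebra element first, so `r b x = x · b`), and the two actions commute. -/
def IsBanachBimodule {A X : Type*} [NormedRing A] [NormedAlgebra ℂ A]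
    [NormedAddCommGroup X] [NormedSpace ℂ X]
    (l : A →L[ℂ] X →L[ℂ] X) (r : A →L[ℂ] X →L[ℂ] X) : Prop :=
  (∀ a b : A, ∀ x : X, l (a * b) x = l a (l b x)) ∧
  (∀ a b : A, ∀ x : X, r (a * b) x = r b (r a x)) ∧
  (∀ a b : A, ∀ x : X, l a (r b x) = r b (l a x))

universe u v

section IdealMul

variable {𝕜 B : Type*} [NontriviallyNormedField 𝕜] [NormedRing B] [NormedAlgebra 𝕜 B]
  (I : Submodule 𝕜 B)

noncomputable def Submodule.mulLeftCLM (hI : ∀ b : B, ∀ x ∈ I, b * x ∈ I) :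
    B →L[𝕜] I →L[𝕜] I :=
  (LinearMap.mk₂ 𝕜 (fun b (x : I) => (⟨b * x, hI b x x.2⟩ : I))
    (fun _ _ _ => Subtype.ext (add_mul _ _ _))
    (fun _ _ _ => Subtype.ext (smul_mul_assoc _ _ _))
    (fun _ _ _ => Subtype.ext (mul_add _ _ _))
    (fun _ _ _ => Subtype.ext (mul_smul_comm _ _ _))).mkContinuous₂
    1 (fun b (x : I) => by simpa using norm_mul_le b (x : B))

noncomputable def Submodule.mulRightCLM (hI : ∀ b : B, ∀ x ∈ I, x * b ∈ I) :
    B →L[𝕜] I →L[𝕜] I :=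
  (LinearMap.mk₂ 𝕜 (fun b (x : I) => (⟨x * b, hI b x x.2⟩ : I))
    (fun _ _ _ => Subtype.ext (mul_add _ _ _))
    (fun _ _ _ => Subtype.ext (mul_smul_comm _ _ _))
    (fun _ _ _ => Subtype.ext (add_mul _ _ _))
    (fun _ _ _ => Subtype.ext (smul_mul_assoc _ _ _))).mkContinuous₂
    1 (fun b (x : I) => by simpa [mul_comm ‖b‖] using norm_mul_le (x : B) b)

@[simp]
theorem Submodule.coe_mulLeftCLM_apply (hI : ∀ b : B, ∀ x ∈ I, b * x ∈ I) (b : B) (x : I) :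
    (I.mulLeftCLM hI b x : B) = b * x :=
  rfl

@[simp]
theorem Submodule.coe_mulRightCLM_apply (hI : ∀ b : B, ∀ x ∈ I, x * b ∈ I) (b : B) (x : I) :
    (I.mulRightCLM hI b x : B) = x * b :=
  rfl

end IdealMul

theorem Submodule.isBanachBimodule_mulCLM {B : Type*} [NormedRing B] [NormedAlgebra ℂ B]
    (I : Submodule ℂ B) (hIleft : ∀ b : B, ∀ x ∈ I, b * x ∈ I)
    (hIright : ∀ b : B, ∀ x ∈ I, x * b ∈ I) :
    IsBanachBimodule (I.mulLeftCLM hIleft) (I.mulRightCLM hIright) := by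
  refine ⟨fun a b x => ?_, fun a b x => ?_, fun a b x => ?_⟩ <;>
    ext <;> simp only [Submodule.coe_mulLeftCLM_apply, Submodule.coe_mulRightCLM_apply, mul_assoc]

theorem IsBanachBimodule.comp {A B X : Type*} [NormedRing A] [NormedAlgebra ℂ A]
    [NormedRing B] [NormedAlgebra ℂ B] [NormedAddCommGroup X] [NormedSpace ℂ X]
    {l r : B →L[ℂ] X →L[ℂ] X} (h : IsBanachBimodule l r)
    (ψ : A →L[ℂ] B) (hψ : ∀ a b : A, ψ (a * b) = ψ a * ψ b) :
    IsBanachBimodule (l.comp ψ) (r.comp ψ) := by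
  obtain ⟨hl, hr, hlr⟩ := h
  refine ⟨fun a b x => ?_, fun a b x => ?_, fun a b x => hlr _ _ x⟩ <;>
    simp only [ContinuousLinearMap.comp_apply, hψ, hl, hr]

/-- Let `A`, `B` be Banach algebras and `φ : A → B` a continuous
surjective algebra homomorphism.  If every continuous derivation from `A` into every
Banach `A`-bimodule is inner (i.e. `A` is amenable), then for every continuous algebra
homomorphism `σ : B → B` and every closed two-sided ideal `I` of `B`, every continuous
`σ`-derivation `D : B → I` is `σ`-inner. -/
theorem sigma_ideal_inner_of_amenable_epimorphism
    {A : Type u} [NormedRing A] [NormedAlgebra ℂ A] [CompleteSpace A]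
    {B : Type u} [NormedRing B] [NormedAlgebra ℂ B] [CompleteSpace B]
    (φ : A →L[ℂ] B) (hφmul : ∀ a b : A, φ (a * b) = φ a * φ b)
    (hφsurj : Function.Surjective φ)
    (hamen : ∀ (X : Type u) [NormedAddCommGroup X] [NormedSpace ℂ X] [CompleteSpace X],
      ∀ l r : A →L[ℂ] X →L[ℂ] X, IsBanachBimodule l r →
      ∀ D : A →L[ℂ] X, (∀ a b : A, D (a * b) = l a (D b) + r b (D a)) →
      ∃ x : X, ∀ a : A, D a = l a x - r a x)
    (σ : B →L[ℂ] B) (hσmul : ∀ a b : B, σ (a * b) = σ a * σ b)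
    (I : Submodule ℂ B) (hIclosed : IsClosed (I : Set B))
    (hIleft : ∀ b : B, ∀ x ∈ I, b * x ∈ I) (hIright : ∀ b : B, ∀ x ∈ I, x * b ∈ I)
    (D : B →L[ℂ] B) (hDI : ∀ b : B, D b ∈ I)
    (hD : ∀ a b : B, D (a * b) = σ a * D b + D a * σ b) :
    ∃ t ∈ I, ∀ b : B, D b = σ b * t - t * σ b := by
  have : CompleteSpace I := hIclosed.completeSpace_coe
  set ψ : A →L[ℂ] B := σ.comp φ
  have hψmul : ∀ a b : A, ψ (a * b) = ψ a * ψ b := fun a b => by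
    simp only [ψ, ContinuousLinearMap.comp_apply, hφmul, hσmul]
  have hbimod := (I.isBanachBimodule_mulCLM hIleft hIright).comp ψ hψmul
  set Dφ : A →L[ℂ] I := (D.codRestrict I hDI).comp φ
  have hDφ : ∀ a b : A, Dφ (a * b) = (I.mulLeftCLM hIleft).comp ψ a (Dφ b)
      + (I.mulRightCLM hIright).comp ψ b (Dφ a) := fun a b =>
    Subtype.ext (by simpa [Dφ, ψ, hφmul] using hD (φ a) (φ b))
  obtain ⟨t, ht⟩ := hamen I _ _ hbimod Dφ hDφ
  refine ⟨t, t.2, fun b => ?_⟩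
  obtain ⟨a, rfl⟩ := hφsurj b
  simpa [Dφ, ψ] using congrArg Subtype.val (ht a)
end

section
/- Let A be a Banach algebra, I a closed two-sided ideal of A, and σ : A → A a continuous algebra homomorphism. Assume: (i) for every Banach A-bimodule X, every continuous linear map d : I → X satisfying d(ij) = σ(i)·d(j) + d(i)·σ(j) for all i, j ∈ I is of the form d(i) = σ(i)·x₀ − x₀·σ(i) for some x₀ ∈ X; and (ii) every continuous derivation from the quotient Banach algebra A/I into every Banach A/I-bimodule is inner. Then for every Banach A-bimodule X, every continuous σ-derivation D : A → X is σ-inner, i.e. D(a) = σ(a)·x − x·σ(a) for some x ∈ X. -/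
universe u

/-- Lift a continuous linear map vanishing on the kernel of a surjective continuous
linear map between Banach spaces. -/
theorem lift_through_surjection
    {A Q Z : Type*} [NormedAddCommGroup A] [NormedSpace ℂ A] [CompleteSpace A]
    [NormedAddCommGroup Q] [NormedSpace ℂ Q] [CompleteSpace Q]
    [NormedAddCommGroup Z] [NormedSpace ℂ Z]
    (q : A →L[ℂ] Q) (hqsurj : Function.Surjective q)
    (f : A →L[ℂ] Z) (hker : ∀ a : A, q a = 0 → f a = 0) :
    ∃ g : Q →L[ℂ] Z, ∀ a : A, g (q a) = f a := by
  have key : ∀ a a' : A, q a = q a' → f a = f a' := by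
    intro a a' h
    have h0 : q (a - a') = 0 := by rw [map_sub, h, sub_self]
    have := hker _ h0
    rw [map_sub, sub_eq_zero] at this
    exact this
  set s : Q → A := fun b => (hqsurj b).choose with hs
  have hqs : ∀ b : Q, q (s b) = b := fun b => (hqsurj b).choose_spec
  set g0 : Q → Z := fun b => f (s b) with hg0def
  have hg0 : ∀ a : A, g0 (q a) = f a := fun a => key _ _ (hqs (q a))
  have hadd : ∀ b c : Q, g0 (b + c) = g0 b + g0 c := by
    intro b c
    have : q (s (b + c)) = q (s b + s c) := by
      rw [map_add, hqs, hqs, hqs]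
    have := key _ _ this
    simpa [g0, map_add] using this
  have hsmul : ∀ (m : ℂ) (b : Q), g0 (m • b) = m • g0 b := by
    intro m b
    have : q (s (m • b)) = q (m • s b) := by rw [map_smul, hqs, hqs]
    have := key _ _ this
    simpa [g0, map_smul] using this
  have hcont : Continuous g0 := by
    rw [(q.isQuotientMap hqsurj).continuous_iff]
    have : g0 ∘ q = f := funext hg0
    rw [this]; exact f.continuous
  exact ⟨⟨⟨⟨g0, hadd⟩, hsmul⟩, hcont⟩, hg0⟩

/-- Restrict a continuous bilinear action to an invariant submodule. -/
theorem restrict_action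
    {A X : Type*} [NormedAddCommGroup A] [NormedSpace ℂ A]
    [NormedAddCommGroup X] [NormedSpace ℂ X]
    (m : A →L[ℂ] X →L[ℂ] X) (Y : Submodule ℂ X)
    (hinv : ∀ a : A, ∀ y ∈ Y, m a y ∈ Y) :
    ∃ mY : A →L[ℂ] Y →L[ℂ] Y, ∀ (a : A) (y : Y), (mY a y : X) = m a y := by
  set f : ∀ _ : A, Y →L[ℂ] Y :=
    fun a => ((m a).comp Y.subtypeL).codRestrict Y (fun y => hinv a y y.2) with hf
  have hfapp : ∀ (a : A) (y : Y), (f a y : X) = m a y := fun a y => rfl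
  have hflin : ∀ (a : A), ‖f a‖ ≤ ‖m‖ * ‖a‖ := by
    intro a
    refine ContinuousLinearMap.opNorm_le_bound _ (by positivity) (fun y => ?_)
    have h1 : ‖f a y‖ = ‖m a (y : X)‖ := rfl
    rw [h1]
    calc ‖m a (y : X)‖ ≤ ‖m‖ * ‖a‖ * ‖(y : X)‖ := m.le_opNorm₂ a (y : X)
      _ = ‖m‖ * ‖a‖ * ‖y‖ := rfl
  refine ⟨LinearMap.mkContinuous
    { toFun := f
      map_add' := by
        intro a b; ext y
        simp only [ContinuousLinearMap.add_apply, Submodule.coe_add, hfapp, map_add]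
      map_smul' := by
        intro c a; ext y
        simp only [RingHom.id_apply, ContinuousLinearMap.smul_apply, Submodule.coe_smul,
          hfapp, map_smul] } ‖m‖ hflin, fun a y => rfl⟩


/-- Let `A` be a Banach algebra, `I` a closed two-sided ideal of `A` and
`σ : A → A` a continuous algebra homomorphism.  Assume (i) every continuous `σ`-derivation
from `I` into any Banach `A`-bimodule `X` is `σ`-inner, and (ii) every continuous
derivation from the quotient Banach algebra `A/I` (here represented by a Banach algebra
`Q` together with a continuous surjective homomorphism `q : A → Q` with kernel `I`) into
every Banach `Q`-bimodule is inner.  Then every continuous `σ`-derivation from `A` into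
every Banach `A`-bimodule is `σ`-inner. -/
theorem sigma_amenable_of_ideal_and_quotient
    {A : Type u} [NormedRing A] [NormedAlgebra ℂ A] [CompleteSpace A]
    (I : Submodule ℂ A) (hIclosed : IsClosed (I : Set A))
    (hIleft : ∀ a : A, ∀ x ∈ I, a * x ∈ I) (hIright : ∀ a : A, ∀ x ∈ I, x * a ∈ I)
    (σ : A →L[ℂ] A) (hσmul : ∀ a b : A, σ (a * b) = σ a * σ b)
    -- (i) every continuous `σ`-derivation from `I` into a Banach `A`-bimodule is `σ`-inner
    (hi : ∀ (X : Type u) [NormedAddCommGroup X] [NormedSpace ℂ X] [CompleteSpace X],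
      ∀ l r : A →L[ℂ] X →L[ℂ] X, IsBanachBimodule l r →
      ∀ d : I →L[ℂ] X,
        (∀ i j : I, d ⟨(i : A) * (j : A), hIleft i j j.2⟩
          = l (σ i) (d j) + r (σ j) (d i)) →
      ∃ x₀ : X, ∀ i : I, d i = l (σ i) x₀ - r (σ i) x₀)
    -- `Q`, together with `q`, represents the quotient Banach algebra `A/I`
    (Q : Type u) [NormedRing Q] [NormedAlgebra ℂ Q] [CompleteSpace Q]
    (q : A →L[ℂ] Q) (hqmul : ∀ a b : A, q (a * b) = q a * q b)
    (hqsurj : Function.Surjective q) (hqker : ∀ a : A, q a = 0 ↔ a ∈ I)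
    -- (ii) every continuous derivation from `A/I` into a Banach `A/I`-bimodule is inner
    (hii : ∀ (X : Type u) [NormedAddCommGroup X] [NormedSpace ℂ X] [CompleteSpace X],
      ∀ l r : Q →L[ℂ] X →L[ℂ] X, IsBanachBimodule l r →
      ∀ D : Q →L[ℂ] X, (∀ a b : Q, D (a * b) = l a (D b) + r b (D a)) →
      ∃ x : X, ∀ a : Q, D a = l a x - r a x) :
    -- then every continuous `σ`-derivation from `A` into a Banach `A`-bimodule is `σ`-inner
    ∀ (X : Type u) [NormedAddCommGroup X] [NormedSpace ℂ X] [CompleteSpace X],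
      ∀ l r : A →L[ℂ] X →L[ℂ] X, IsBanachBimodule l r →
      ∀ D : A →L[ℂ] X, (∀ a b : A, D (a * b) = l (σ a) (D b) + r (σ b) (D a)) →
      ∃ x : X, ∀ a : A, D a = l (σ a) x - r (σ a) x := by
  intro X _ _ _ l r hblr D hD
  obtain ⟨hl, hr, hc⟩ := hblr
  -- Step 1: restrict `D` to `I` and apply hypothesis (i)
  obtain ⟨x₀, hx₀⟩ := hi X l r ⟨hl, hr, hc⟩ (D.comp I.subtypeL) (by
    intro i j
    simpa using hD (i : A) (j : A))
  -- Step 2: subtract the inner σ-derivation given by `x₀`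
  set E : A →L[ℂ] X := D - ((l - r).comp σ).flip x₀ with hEdef
  have hEapp : ∀ a : A, E a = D a - (l (σ a) x₀ - r (σ a) x₀) := by
    intro a
    simp [E, ContinuousLinearMap.flip_apply, sub_eq_add_neg]
  have hEder : ∀ a b : A, E (a * b) = l (σ a) (E b) + r (σ b) (E a) := by
    intro a b
    simp only [hEapp]
    rw [hD, hσmul, hl (σ a) (σ b) x₀, hr (σ a) (σ b) x₀]
    simp only [map_sub]
    rw [hc (σ a) (σ b) x₀]
    abel
  have hEI : ∀ i ∈ I, E i = 0 := by
    intro i hi'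
    have h := hx₀ ⟨i, hi'⟩
    simp only [ContinuousLinearMap.comp_apply, Submodule.subtypeL_apply] at h
    rw [hEapp, h]
    simp
  have hlE : ∀ i ∈ I, ∀ a : A, l (σ i) (E a) = 0 := by
    intro i hi' a
    have h := hEder i a
    rw [hEI _ (hIright a i hi'), hEI i hi'] at h
    simpa using h.symm
  have hrE : ∀ i ∈ I, ∀ a : A, r (σ i) (E a) = 0 := by
    intro i hi' a
    have h := hEder a i
    rw [hEI _ (hIleft a i hi'), hEI i hi'] at h
    simpa using h.symm
  -- Step 3: the closed invariant subspace `Y`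
  set Y : Submodule ℂ X :=
    { carrier := {x : X | ∀ i ∈ I, l (σ i) x = 0 ∧ r (σ i) x = 0}
      add_mem' := by
        intro x y hx hy
        intro i hi'
        simp [map_add, (hx i hi').1, (hx i hi').2, (hy i hi').1, (hy i hi').2]
      zero_mem' := by intro i hi'; simp
      smul_mem' := by
        intro c x hx i hi'
        simp [map_smul, (hx i hi').1, (hx i hi').2] } with hYdef
  have hYmem : ∀ x : X, x ∈ Y ↔ ∀ i ∈ I, l (σ i) x = 0 ∧ r (σ i) x = 0 := fun x => Iff.rfl
  have hYclosed : IsClosed (Y : Set X) := by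
    have : (Y : Set X) =
        ⋂ (i : A) (_ : i ∈ I), ({x : X | l (σ i) x = 0} ∩ {x : X | r (σ i) x = 0}) := by
      ext x
      simp only [Set.mem_iInter, Set.mem_inter_iff, Set.mem_setOf_eq, SetLike.mem_coe, hYmem]
    rw [this]
    exact isClosed_biInter fun i _ =>
      (isClosed_eq (l (σ i)).continuous continuous_const).inter
        (isClosed_eq (r (σ i)).continuous continuous_const)
  haveI : CompleteSpace Y := hYclosed.completeSpace_coe
  -- Step 4: restricted actions on `Y`
  have hlinv : ∀ a : A, ∀ y ∈ Y, (l.comp σ) a y ∈ Y := by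
    intro a y hy
    rw [hYmem] at hy ⊢
    intro i hi'
    constructor
    · have : l (σ i) (l (σ a) y) = l (σ i * σ a) y := (hl _ _ _).symm
      rw [ContinuousLinearMap.comp_apply, this, ← hσmul]
      exact (hy (i * a) (hIright a i hi')).1
    · rw [ContinuousLinearMap.comp_apply, ← hc, (hy i hi').2, map_zero]
  have hrinv : ∀ a : A, ∀ y ∈ Y, (r.comp σ) a y ∈ Y := by
    intro a y hy
    rw [hYmem] at hy ⊢
    intro i hi'
    constructor
    · rw [ContinuousLinearMap.comp_apply, hc, (hy i hi').1, map_zero]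
    · have : r (σ i) (r (σ a) y) = r (σ a * σ i) y := (hr _ _ _).symm
      rw [ContinuousLinearMap.comp_apply, this, ← hσmul]
      exact (hy (a * i) (hIleft a i hi')).2
  obtain ⟨lY, hlY⟩ := restrict_action (l.comp σ) Y hlinv
  obtain ⟨rY, hrY⟩ := restrict_action (r.comp σ) Y hrinv
  simp only [ContinuousLinearMap.comp_apply] at hlY hrY
  -- Step 5: lift the actions to `Q`
  have hkerl : ∀ a : A, q a = 0 → lY a = 0 := by
    intro a ha
    have haI : a ∈ I := (hqker a).1 ha
    ext y
    have h1 : (lY a y : X) = l (σ a) y := hlY a y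
    have h2 : l (σ a) (y : X) = 0 := ((hYmem (y : X)).1 y.2 a haI).1
    have : (lY a y : X) = ((0 : Y →L[ℂ] Y) y : X) := by rw [h1, h2]; rfl
    exact_mod_cast this
  have hkerr : ∀ a : A, q a = 0 → rY a = 0 := by
    intro a ha
    have haI : a ∈ I := (hqker a).1 ha
    ext y
    have h1 : (rY a y : X) = r (σ a) y := hrY a y
    have h2 : r (σ a) (y : X) = 0 := ((hYmem (y : X)).1 y.2 a haI).2
    have : (rY a y : X) = ((0 : Y →L[ℂ] Y) y : X) := by rw [h1, h2]; rfl
    exact_mod_cast this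
  obtain ⟨lQ, hlQ⟩ := lift_through_surjection (Z := Y →L[ℂ] Y) q hqsurj lY hkerl
  obtain ⟨rQ, hrQ⟩ := lift_through_surjection (Z := Y →L[ℂ] Y) q hqsurj rY hkerr
  -- Step 6: `E` corestricted to `Y`, then lifted to `Q`
  have hEmem : ∀ a : A, E a ∈ Y := by
    intro a
    rw [hYmem]
    intro i hi'
    exact ⟨hlE i hi' a, hrE i hi' a⟩
  set E' : A →L[ℂ] Y := E.codRestrict Y hEmem with hE'def
  have hE'ker : ∀ a : A, q a = 0 → E' a = 0 := by
    intro a ha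
    have : (E' a : X) = E a := rfl
    have h0 := hEI a ((hqker a).1 ha)
    exact Subtype.ext (by rw [this, h0]; rfl)
  obtain ⟨DQ, hDQ⟩ := lift_through_surjection (Z := Y) q hqsurj E' hE'ker
  -- Step 7: `lQ, rQ` form a Banach `Q`-bimodule and `DQ` is a derivation
  have hbQ : IsBanachBimodule lQ rQ := by
    refine ⟨?_, ?_, ?_⟩ <;> intro b c y
    · obtain ⟨a, rfl⟩ := hqsurj b
      obtain ⟨a', rfl⟩ := hqsurj c
      rw [← hqmul, hlQ, hlQ, hlQ]
      refine Subtype.ext ?_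
      simp only [hlY, hσmul]
      exact hl _ _ _
    · obtain ⟨a, rfl⟩ := hqsurj b
      obtain ⟨a', rfl⟩ := hqsurj c
      rw [← hqmul, hrQ, hrQ, hrQ]
      refine Subtype.ext ?_
      simp only [hrY, hσmul]
      exact hr _ _ _
    · obtain ⟨a, rfl⟩ := hqsurj b
      obtain ⟨a', rfl⟩ := hqsurj c
      rw [hlQ, hrQ]
      refine Subtype.ext ?_
      simp only [hlY, hrY]
      exact hc _ _ _
  have hDQder : ∀ b c : Q, DQ (b * c) = lQ b (DQ c) + rQ c (DQ b) := by
    intro b c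
    obtain ⟨a, rfl⟩ := hqsurj b
    obtain ⟨a', rfl⟩ := hqsurj c
    rw [← hqmul, hDQ, hDQ, hDQ, hlQ, hrQ]
    refine Subtype.ext ?_
    have hcoe : ∀ b : A, ((E' b : Y) : X) = E b := fun b => rfl
    simp only [Submodule.coe_add, hlY, hrY, hcoe]
    exact hEder a a'
  -- Step 8: apply hypothesis (ii) and conclude
  obtain ⟨y, hy⟩ := hii Y lQ rQ hbQ DQ hDQder
  refine ⟨x₀ + (y : X), fun a => ?_⟩
  have h1 := hy (q a)
  rw [hDQ, hlQ, hrQ] at h1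
  have h2 : (E' a : X) = ((lY a y - rY a y : Y) : X) := by rw [h1]
  rw [Submodule.coe_sub, hlY, hrY] at h2
  have h3 : E a = l (σ a) (y : X) - r (σ a) (y : X) := h2
  have h4 : D a = E a + (l (σ a) x₀ - r (σ a) x₀) := by rw [hEapp]; abel
  rw [h4, h3, map_add, map_add]
  abel
end

section
/- Let A be a Banach algebra, I a closed two-sided ideal of A, σ : A → A a continuous algebra homomorphism, X a Banach A-bimodule, and D₁ : A → X a continuous σ-derivation with D₁(i) = 0 for all i ∈ I. Let X₀ be the closed linear span in X of the set (X·σ(I)) ∪ (σ(I)·X). Then the quotient X/X₀ is a Banach A/I-bimodule via (a + I)·(x + X₀) = σ(a)·x + X₀ and (x + X₀)·(a + I) = x·σ(a) + X₀ (these actions are well defined), and the map D̂ : A/I → X/X₀ given by D̂(a + I) = D₁(a) + X₀ is a well-defined continuous derivation: D̂((a+I)(b+I)) = (a+I)·D̂(b+I) + D̂(a+I)·(b+I). -/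
/-- The closed linear span `X₀` of `(X · σ(I)) ∪ (σ(I) · X)` inside `X`. -/
noncomputable def spanSigmaIdeal {A X : Type*} [NormedRing A] [NormedAlgebra ℂ A]
    [NormedAddCommGroup X] [NormedSpace ℂ X] (I : Submodule ℂ A) (σ : A →L[ℂ] A)
    (l : A →L[ℂ] X →L[ℂ] X) (r : A →L[ℂ] X →L[ℂ] X) : Submodule ℂ X :=
  (Submodule.span ℂ
    {z : X | ∃ (x : X) (i : A), i ∈ I ∧ (z = r (σ i) x ∨ z = l (σ i) x)}).topologicalClosure

/-- Let `A` be a Banach algebra, `I` a closed two-sided ideal, `σ` a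
continuous endomorphism of `A`, `X` a Banach `A`-bimodule and `D₁ : A → X` a continuous
`σ`-derivation vanishing on `I`.  Let `X₀` be the closed linear span of
`(X·σ(I)) ∪ (σ(I)·X)`.  Then `X/X₀` is a Banach `A/I`-bimodule via
`(a + I)·(x + X₀) = σ(a)·x + X₀` and `(x + X₀)·(a + I) = x·σ(a) + X₀` (these actions are
well defined) and `D̂(a + I) = D₁(a) + X₀` is a well-defined continuous derivation. -/
theorem quotient_bimodule_derivation
    {A : Type*} [NormedRing A] [NormedAlgebra ℂ A] [CompleteSpace A]
    (I : Submodule ℂ A) (hIclosed : IsClosed (I : Set A))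
    (hIleft : ∀ a : A, ∀ x ∈ I, a * x ∈ I) (hIright : ∀ a : A, ∀ x ∈ I, x * a ∈ I)
    (σ : A →L[ℂ] A) (hσmul : ∀ a b : A, σ (a * b) = σ a * σ b)
    {X : Type*} [NormedAddCommGroup X] [NormedSpace ℂ X] [CompleteSpace X]
    (l r : A →L[ℂ] X →L[ℂ] X) (hbi : IsBanachBimodule l r)
    (D₁ : A →L[ℂ] X)
    (hD₁ : ∀ a b : A, D₁ (a * b) = l (σ a) (D₁ b) + r (σ b) (D₁ a))
    (hD₁I : ∀ i ∈ I, D₁ i = 0) :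
    -- `X/X₀` is again a Banach space
    CompleteSpace (X ⧸ spanSigmaIdeal I σ l r) ∧
    -- the left action `(a + I)·(x + X₀) = σ(a)·x + X₀` is well defined
    (∀ a a' : A, ∀ x x' : X, a - a' ∈ I → x - x' ∈ spanSigmaIdeal I σ l r →
      l (σ a) x - l (σ a') x' ∈ spanSigmaIdeal I σ l r) ∧
    -- the right action `(x + X₀)·(a + I) = x·σ(a) + X₀` is well defined
    (∀ a a' : A, ∀ x x' : X, a - a' ∈ I → x - x' ∈ spanSigmaIdeal I σ l r →
      r (σ a) x - r (σ a') x' ∈ spanSigmaIdeal I σ l r) ∧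
    -- the actions satisfy the bimodule axioms modulo `X₀`
    (∀ a b : A, ∀ x : X,
      (Submodule.Quotient.mk (l (σ (a * b)) x) : X ⧸ spanSigmaIdeal I σ l r)
        = Submodule.Quotient.mk (l (σ a) (l (σ b) x)) ∧
      (Submodule.Quotient.mk (r (σ (a * b)) x) : X ⧸ spanSigmaIdeal I σ l r)
        = Submodule.Quotient.mk (r (σ b) (r (σ a) x)) ∧
      (Submodule.Quotient.mk (l (σ a) (r (σ b) x)) : X ⧸ spanSigmaIdeal I σ l r)
        = Submodule.Quotient.mk (r (σ b) (l (σ a) x))) ∧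
    -- `D̂ (a + I) = D₁ a + X₀` is well defined ...
    (∀ a a' : A, a - a' ∈ I → D₁ a - D₁ a' ∈ spanSigmaIdeal I σ l r) ∧
    -- ... continuous ...
    Continuous (fun a : A =>
      (Submodule.Quotient.mk (D₁ a) : X ⧸ spanSigmaIdeal I σ l r)) ∧
    -- ... and a derivation: `D̂((a+I)(b+I)) = (a+I)·D̂(b+I) + D̂(a+I)·(b+I)`
    (∀ a b : A,
      (Submodule.Quotient.mk (D₁ (a * b)) : X ⧸ spanSigmaIdeal I σ l r)
        = Submodule.Quotient.mk (l (σ a) (D₁ b)) + Submodule.Quotient.mk (r (σ b) (D₁ a))) := by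
  obtain ⟨hl, hr, hc⟩ := hbi
  set S : Submodule ℂ X := Submodule.span ℂ
    {z : X | ∃ (x : X) (i : A), i ∈ I ∧ (z = r (σ i) x ∨ z = l (σ i) x)} with hS
  have hSle : S ≤ spanSigmaIdeal I σ l r := Submodule.le_topologicalClosure S
  have hgen : ∀ (x : X) (i : A), i ∈ I → r (σ i) x ∈ S ∧ l (σ i) x ∈ S := by
    intro x i hi
    exact ⟨Submodule.subset_span ⟨x, i, hi, Or.inl rfl⟩,
      Submodule.subset_span ⟨x, i, hi, Or.inr rfl⟩⟩
  -- invariance of `S` under the actions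
  have hlinv : ∀ a : A, Set.MapsTo (l (σ a)) (S : Set X) (S : Set X) := by
    intro a x hx
    induction hx using Submodule.span_induction with
    | mem z hz =>
      obtain ⟨y, i, hi, hz | hz⟩ := hz
      · rw [hz, hc]; exact (hgen _ i hi).1
      · rw [hz, ← hl, ← hσmul]; exact (hgen _ _ (hIleft a i hi)).2
    | zero => simpa using S.zero_mem
    | add p q _ _ hp hq => rw [map_add]; exact S.add_mem hp hq
    | smul c p _ hp => rw [map_smul]; exact S.smul_mem c hp
  have hrinv : ∀ a : A, Set.MapsTo (r (σ a)) (S : Set X) (S : Set X) := by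
    intro a x hx
    induction hx using Submodule.span_induction with
    | mem z hz =>
      obtain ⟨y, i, hi, hz | hz⟩ := hz
      · rw [hz, ← hr, ← hσmul]; exact (hgen _ _ (hIright a i hi)).1
      · rw [hz, ← hc]; exact (hgen _ i hi).2
    | zero => simpa using S.zero_mem
    | add p q _ _ hp hq => rw [map_add]; exact S.add_mem hp hq
    | smul c p _ hp => rw [map_smul]; exact S.smul_mem c hp
  have hlinv' : ∀ a : A, ∀ x ∈ spanSigmaIdeal I σ l r,
      l (σ a) x ∈ spanSigmaIdeal I σ l r := by
    intro a x hx
    exact map_mem_closure (l (σ a)).continuous hx (hlinv a)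
  have hrinv' : ∀ a : A, ∀ x ∈ spanSigmaIdeal I σ l r,
      r (σ a) x ∈ spanSigmaIdeal I σ l r := by
    intro a x hx
    exact map_mem_closure (r (σ a)).continuous hx (hrinv a)
  refine ⟨?_, ?_, ?_, ?_, ?_, ?_, ?_⟩
  · exact inferInstance
  · intro a a' x x' ha hx
    have h1 : l (σ a) x - l (σ a') x' =
        l (σ (a - a')) x + l (σ a') (x - x') := by
      rw [map_sub σ, map_sub (l : A →L[ℂ] X →L[ℂ] X)]
      simp only [ContinuousLinearMap.sub_apply, map_sub]
      abel
    rw [h1]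
    exact (spanSigmaIdeal I σ l r).add_mem (hSle (hgen x _ ha).2) (hlinv' a' _ hx)
  · intro a a' x x' ha hx
    have h1 : r (σ a) x - r (σ a') x' =
        r (σ (a - a')) x + r (σ a') (x - x') := by
      rw [map_sub σ, map_sub (r : A →L[ℂ] X →L[ℂ] X)]
      simp only [ContinuousLinearMap.sub_apply, map_sub]
      abel
    rw [h1]
    exact (spanSigmaIdeal I σ l r).add_mem (hSle (hgen x _ ha).1) (hrinv' a' _ hx)
  · intro a b x
    refine ⟨?_, ?_, ?_⟩
    · rw [hσmul, hl]
    · rw [hσmul, hr]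
    · rw [hc]
  · intro a a' ha
    have : D₁ a - D₁ a' = D₁ (a - a') := (map_sub D₁ a a').symm
    rw [this, hD₁I _ ha]
    exact (spanSigmaIdeal I σ l r).zero_mem
  · have hcont : Continuous (Submodule.Quotient.mk : X → X ⧸ spanSigmaIdeal I σ l r) :=
      AddMonoidHomClass.continuous_of_bound (spanSigmaIdeal I σ l r).mkQ 1
        (fun x => by simpa using Submodule.Quotient.norm_mk_le _ x)
    exact hcont.comp D₁.continuous
  · intro a b
    rw [hD₁ a b, ← Submodule.Quotient.mk_add]
end

section
/- Let A be a Banach algebra and σ : A → A a continuous algebra homomorphism. Suppose that for every Banach A-bimodule X, every continuous σ-derivation D : A → X is σ-inner. Then σ(A) has an identity: there exists u ∈ A such that u·σ(a) = σ(a) and σ(a)·u = σ(a) for all a ∈ A. -/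
universe u

/-- Let `A` be a Banach algebra and `σ : A → A` a continuous algebra
homomorphism.  If every continuous `σ`-derivation from `A` into every Banach
`A`-bimodule is `σ`-inner (i.e. `A` is `σ`-amenable), then `σ(A)` has an identity. -/
theorem sigma_range_has_identity_of_sigma_amenable
    {A : Type u} [NormedRing A] [NormedAlgebra ℂ A] [CompleteSpace A]
    (σ : A →L[ℂ] A) (hσmul : ∀ a b : A, σ (a * b) = σ a * σ b)
    (hamen : ∀ (X : Type u) [NormedAddCommGroup X] [NormedSpace ℂ X] [CompleteSpace X],
      ∀ l r : A →L[ℂ] X →L[ℂ] X, IsBanachBimodule l r →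
      ∀ D : A →L[ℂ] X, (∀ a b : A, D (a * b) = l (σ a) (D b) + r (σ b) (D a)) →
      ∃ x : X, ∀ a : A, D a = l (σ a) x - r (σ a) x) :
    ∃ u : A, ∀ a : A, u * σ a = σ a ∧ σ a * u = σ a := by
  set L : A →L[ℂ] A →L[ℂ] A := ContinuousLinearMap.mul ℂ A with hL
  set R : A →L[ℂ] A →L[ℂ] A := (ContinuousLinearMap.mul ℂ A).flip with hR
  have hLapp : ∀ a x : A, L a x = a * x := fun _ _ => rfl
  have hRapp : ∀ a x : A, R a x = x * a := fun _ _ => rfl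
  -- First instance: trivial left action, right action by multiplication.
  obtain ⟨x₁, hx₁⟩ := hamen A 0 R
    ⟨fun a b x => by simp, fun a b x => by simp [hRapp, mul_assoc],
     fun a b x => by simp⟩
    σ (fun a b => by simp [hRapp, hσmul])
  -- Second instance: left action by multiplication, trivial right action.
  obtain ⟨x₂, hx₂⟩ := hamen A L 0
    ⟨fun a b x => by simp [hLapp, mul_assoc], fun a b x => by simp,
     fun a b x => by simp⟩
    σ (fun a b => by simp [hLapp, hσmul])
  -- `e := -x₁` is a left identity for `σ(A)`, `f := x₂` a right identity.
  have he : ∀ a : A, (-x₁) * σ a = σ a := by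
    intro a
    have := hx₁ a
    simp [hRapp] at this
    rw [neg_mul]; exact this.symm
  have hf : ∀ a : A, σ a * x₂ = σ a := by
    intro a
    have := hx₂ a
    simpa [hLapp] using this.symm
  refine ⟨(-x₁) + x₂ - x₂ * (-x₁), fun a => ?_⟩
  constructor
  · rw [sub_mul, add_mul, he, mul_assoc, he]
    abel
  · rw [mul_sub, mul_add, hf, ← mul_assoc, hf]
    abel
end

section
/- Let A be a commutative Banach algebra which is weakly amenable, i.e. every continuous derivation D : A → A* into the dual bimodule A* is inner (equivalently zero), where A* carries the actions (a·f)(b) = f(ba) and (f·a)(b) = f(ab). Let B be a Banach algebra, φ : A → B a continuous surjective algebra homomorphism, σ : B → B a continuous algebra homomorphism, and I a closed two-sided ideal of B. Then every continuous σ-derivation D : B → I is identically zero. -/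
/-- Let `A` be a commutative, weakly amenable Banach algebra (every
continuous derivation `D : A → A*` into the dual bimodule, with actions
`(a·f)(b) = f(b*a)` and `(f·a)(b) = f(a*b)`, is inner).  Let `B` be a Banach algebra,
`φ : A → B` a continuous surjective algebra homomorphism, `σ : B → B` a continuous
algebra homomorphism and `I` a closed two-sided ideal of `B`.  Then every continuous
`σ`-derivation `D : B → I` is identically zero. -/
theorem sigma_ideal_derivation_zero_of_weakly_amenable_commutative
    {A : Type*} [NormedCommRing A] [NormedAlgebra ℂ A] [CompleteSpace A]
    (hwa : ∀ D : A →L[ℂ] (A →L[ℂ] ℂ),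
      (∀ a b : A, ∀ c : A, D (a * b) c = D b (c * a) + D a (b * c)) →
      ∃ f : A →L[ℂ] ℂ, ∀ a c : A, D a c = f (c * a) - f (a * c))
    {B : Type*} [NormedRing B] [NormedAlgebra ℂ B] [CompleteSpace B]
    (φ : A →L[ℂ] B) (hφmul : ∀ a b : A, φ (a * b) = φ a * φ b)
    (hφsurj : Function.Surjective φ)
    (σ : B →L[ℂ] B) (hσmul : ∀ a b : B, σ (a * b) = σ a * σ b)
    (I : Submodule ℂ B) (hIclosed : IsClosed (I : Set B))
    (hIleft : ∀ b : B, ∀ x ∈ I, b * x ∈ I) (hIright : ∀ b : B, ∀ x ∈ I, x * b ∈ I)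
    (D : B →L[ℂ] B) (hDI : ∀ b : B, D b ∈ I)
    (hD : ∀ a b : B, D (a * b) = σ a * D b + D a * σ b) :
    ∀ b : B, D b = 0 := by
  -- `B` is commutative, being the image of the commutative algebra `A`.
  have Bcomm : ∀ x y : B, x * y = y * x := by
    intro x y
    obtain ⟨a, rfl⟩ := hφsurj x
    obtain ⟨b, rfl⟩ := hφsurj y
    rw [← hφmul, ← hφmul, mul_comm]
  -- Step 1: for every continuous functional `l` on `B`, `l (σ (φ c) * D (φ a)) = 0`.
  have key1 : ∀ l : B →L[ℂ] ℂ, ∀ a c : A, l (σ (φ c) * D (φ a)) = 0 := by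
    intro l a c
    set ρ : A →L[ℂ] B := σ.comp φ with hρ
    set T : A →L[ℂ] (A →L[ℂ] ℂ) :=
      ((ContinuousLinearMap.compL ℂ A B ℂ) l).comp
        ((((ContinuousLinearMap.compL ℂ A B B).flip ρ).comp
          (ContinuousLinearMap.mul ℂ B).flip).comp (D.comp φ)) with hT
    have hTapp : ∀ a c : A, T a c = l (σ (φ c) * D (φ a)) := by
      intro a c
      simp [hT, hρ]
    have hTder : ∀ a b c : A, T (a * b) c = T b (c * a) + T a (b * c) := by
      intro a b c
      rw [hTapp, hTapp, hTapp, hφmul, hD, mul_add, map_add, hφmul, hσmul, hφmul,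
        hσmul]
      congr 2
      · rw [mul_assoc]
      · rw [Bcomm (D (φ a)) (σ (φ b)), ← mul_assoc, Bcomm (σ (φ c)) (σ (φ b))]
    obtain ⟨f, hf⟩ := hwa T hTder
    have := hf a c
    rw [hTapp] at this
    rw [this, mul_comm, sub_self]
  -- Step 2: `σ (φ c) * D b = 0` by Hahn–Banach separation.
  have key2 : ∀ (c : A) (b : B), σ (φ c) * D b = 0 := by
    intro c b
    obtain ⟨a, rfl⟩ := hφsurj b
    exact NormedSpace.eq_zero_of_forall_dual_eq_zero ℂ (fun l => key1 l a c)
  -- Step 3: `D` vanishes on products.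
  have key3 : ∀ x y : B, D (x * y) = 0 := by
    intro x y
    obtain ⟨c, rfl⟩ := hφsurj x
    obtain ⟨d, rfl⟩ := hφsurj y
    rw [hD, key2, Bcomm (D (φ c)) (σ (φ d)), key2, add_zero]
  -- Step 4: conclude `D = 0` using weak amenability once more.
  intro b
  obtain ⟨a, rfl⟩ := hφsurj b
  refine NormedSpace.eq_zero_of_forall_dual_eq_zero ℂ (fun l => ?_)
  set μ : A →L[ℂ] ℂ := l.comp (D.comp φ) with hμ
  have hμprod : ∀ x y : A, μ (x * y) = 0 := by
    intro x y
    simp [hμ, hφmul, key3]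
  set E : A →L[ℂ] (A →L[ℂ] ℂ) := μ.smulRight μ with hE
  have hEder : ∀ a b c : A, E (a * b) c = E b (c * a) + E a (b * c) := by
    intro a b c
    simp [hE, hμprod, smul_eq_mul]
  obtain ⟨f, hf⟩ := hwa E hEder
  have h1 : μ a * μ a = 0 := by
    have := hf a a
    simpa [hE, smul_eq_mul] using this
  have h2 : μ a = 0 := by
    have := mul_self_eq_zero.mp h1
    exact this
  simpa [hμ] using h2
end

section
/- Let A be a Banach algebra over ℂ possessing a right approximate identity (a net (e_i) in A with a·e_i → a in norm for every a ∈ A). Let A♯ = Unitization ℂ A and define σ : A♯ → A♯ by σ(a + λ1) = λ1 (the unital algebra homomorphism killing A). Then every continuous σ-derivation D : A♯ → A♯, i.e. every continuous linear map with D(uv) = σ(u)·D(v) + D(u)·σ(v) for all u, v ∈ A♯, is identically zero. -/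
universe u

set_option synthInstance.maxHeartbeats 1000000 in
/-- Let `A` be a Banach algebra over `ℂ` with a right approximate
identity, let `A♯ = Unitization ℂ A` and let `σ : A♯ → A♯` be the unital homomorphism
`σ (a + λ•1) = λ•1` killing `A`.  Then every continuous `σ`-derivation
`D : A♯ → A♯` is identically zero. -/
theorem unitization_scalar_sigma_derivation_zero
    {A : Type u} [NonUnitalNormedRing A] [NormedSpace ℂ A]
    [IsScalarTower ℂ A A] [SMulCommClass ℂ A A] [RegularNormedAlgebra ℂ A]
    [CompleteSpace A]
    -- right approximate identity for `A`
    {ι : Type u} (lt : Filter ι) [lt.NeBot] (e : ι → A)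
    (hre : ∀ a : A, Filter.Tendsto (fun i => a * e i) lt (nhds a))
    -- a continuous `σ`-derivation on the unitization, `σ u = inl (fst u)`
    (D : Unitization ℂ A →L[ℂ] Unitization ℂ A)
    (hD : ∀ u v : Unitization ℂ A,
      D (u * v) = Unitization.inl u.fst * D v + D u * Unitization.inl v.fst) :
    ∀ u : Unitization ℂ A, D u = 0 := by
  -- D(1) = 0
  have hone : D 1 = 0 := by
    have h := hD 1 1
    simp only [one_mul, Unitization.fst_one, Unitization.inl_one, mul_one] at h
    have h2 : D 1 + 0 = D 1 + D 1 := by rw [add_zero]; exact h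
    exact (add_left_cancel h2).symm
  -- D vanishes on inr A
  have hinr : ∀ a : A, D (Unitization.inr a) = 0 := by
    intro a
    have hzero : ∀ i, D (Unitization.inr (a * e i) : Unitization ℂ A) = 0 := by
      intro i
      have h := hD (Unitization.inr a) (Unitization.inr (e i))
      simpa [Unitization.inr_mul] using h
    have htend : Filter.Tendsto (fun i => D (Unitization.inr (a * e i) : Unitization ℂ A))
        lt (nhds (D (Unitization.inr a))) := by
      exact (D.continuous.comp Unitization.continuous_inr).continuousAt.tendsto.comp
        (hre a)
    have htend0 : Filter.Tendsto (fun i => D (Unitization.inr (a * e i) : Unitization ℂ A))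
        lt (nhds 0) := by
      exact Filter.Tendsto.congr (fun i => (hzero i).symm) tendsto_const_nhds
    exact tendsto_nhds_unique htend htend0
  intro u
  have : u = Unitization.inl u.fst + Unitization.inr u.snd :=
    (Unitization.inl_fst_add_inr_snd_eq u).symm
  rw [this, map_add, hinr]
  have h3 : (Unitization.inl u.fst : Unitization ℂ A) = u.fst • 1 := by
    rw [← Unitization.algebraMap_eq_inl, Algebra.algebraMap_eq_smul_one]
  rw [h3, map_smul, hone]
  simp
end
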